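/- Sequential affinity bound: fix λ ∈ (0,1), a finite input alphabet X, a finite output alphabet Y, and a set 𝒯 of channels from X to Y. Let β* = inf over T ∈ 𝒯 of β_λ(TP, TQ). For any sequence of sequentially interactive channels T¹,…,Tⁿ (where Tⁱ maps (X_i, y_1,…,y_{i−1}) to Y_i, and for each fixed history the induced channel on X_i lies in 𝒯), the induced output distributions P_{Y₁ⁿ}, Q_{Y₁ⁿ} (from inputs P^⊗n, Q^⊗n respectively) satisfy β_λ(P_{Y₁ⁿ}, Q_{Y₁ⁿ}) ≥ (β*)ⁿ. -/
import Mathlib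

open Real Finset

/-- Hellinger-λ affinity between two distributions on a finite set. -/
noncomputable def betaAff {Y : Type*} [Fintype Y] (l : ℝ) (μ ν : Y → ℝ) : ℝ :=
  ∑ y, μ y ^ l * ν y ^ (1 - l)

/-- Output distribution of a sequence of sequentially interactive channels, where
channel `i` may depend on the transcript `y₁, …, y_{i-1}`; the inputs are i.i.d.
from `P`. -/
noncomputable def seqOut {X Y : Type*} [Fintype X] [Fintype Y] (n : ℕ)
    (P : X → ℝ) (T : (i : Fin n) → X → (Fin i → Y) → Y → ℝ) : (Fin n → Y) → ℝ :=
  fun y => ∏ i, ∑ x, P x * T i x (fun j => y (Fin.castLE i.isLt.le j)) (y i)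

lemma seqOut_nonneg {X Y : Type*} [Fintype X] [Fintype Y] (n : ℕ)
    (P : X → ℝ) (hP0 : ∀ x, 0 ≤ P x)
    (T : (i : Fin n) → X → (Fin i → Y) → Y → ℝ)
    (hT0 : ∀ i x h y, 0 ≤ T i x h y) (y : Fin n → Y) :
    0 ≤ seqOut n P T y := by
  refine Finset.prod_nonneg fun i _ => Finset.sum_nonneg fun x _ =>
    mul_nonneg (hP0 x) (hT0 _ _ _ _)

lemma sum_snoc {Y : Type*} [Fintype Y] (n : ℕ) (f : (Fin (n+1) → Y) → ℝ) :
    ∑ y, f y = ∑ y' : Fin n → Y, ∑ a : Y, f (Fin.snoc y' a) := by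
  calc ∑ y, f y = ∑ p : Y × (Fin n → Y), f (Fin.snoc p.2 p.1) :=
        (Fintype.sum_equiv (Fin.snocEquiv (fun _ => Y)) _ _ (fun p => rfl)).symm
    _ = ∑ a : Y, ∑ y' : Fin n → Y, f (Fin.snoc y' a) :=
        Fintype.sum_prod_type (fun p => f (Fin.snoc p.2 p.1))
    _ = _ := Finset.sum_comm

lemma seqOut_snoc {X Y : Type*} [Fintype X] [Fintype Y] (n : ℕ)
    (P : X → ℝ) (T : (i : Fin (n+1)) → X → (Fin i → Y) → Y → ℝ)
    (y' : Fin n → Y) (a : Y) :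
    seqOut (n+1) P T (Fin.snoc y' a)
      = seqOut n P (fun j => T j.castSucc) y' * ∑ x, P x * T (Fin.last n) x y' a := by
  unfold seqOut
  rw [Fin.prod_univ_castSucc]
  congr 1
  · refine Finset.prod_congr rfl fun j _ => ?_
    refine Finset.sum_congr rfl fun x _ => ?_
    have h1 : (fun k : Fin (j.castSucc : Fin (n+1)).val =>
        (Fin.snoc y' a : Fin (n+1) → Y) (Fin.castLE (j.castSucc).isLt.le k))
        = (fun k : Fin j.val => y' (Fin.castLE j.isLt.le k)) := by
      funext k
      show (Fin.snoc y' a : Fin (n+1) → Y) (Fin.castSucc (Fin.castLE j.isLt.le k)) = _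
      rw [Fin.snoc_castSucc]
    have h2 : (Fin.snoc y' a : Fin (n+1) → Y) j.castSucc = y' j := Fin.snoc_castSucc ..
    rw [h2]
    exact congrArg (fun h => P x * T j.castSucc x h (y' j)) h1
  · refine Finset.sum_congr rfl fun x _ => ?_
    have h1 : (fun k : Fin (Fin.last n).val =>
        (Fin.snoc y' a : Fin (n+1) → Y) (Fin.castLE (Fin.last n).isLt.le k))
        = y' := by
      funext k
      show (Fin.snoc y' a : Fin (n+1) → Y) (Fin.castSucc k) = _
      rw [Fin.snoc_castSucc]
    have h2 : (Fin.snoc y' a : Fin (n+1) → Y) (Fin.last n) = a := Fin.snoc_last ..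
    rw [h2]
    exact congrArg (fun h => P x * T (Fin.last n) x h a) h1

theorem sequential_affinity_bound {X Y : Type*} [Fintype X] [Fintype Y]
    (l : ℝ) (hl : l ∈ Set.Ioo (0 : ℝ) 1)
    (𝒯 : Set (X → Y → ℝ))
    (h𝒯 : ∀ T ∈ 𝒯, (∀ x y, 0 ≤ T x y) ∧ ∀ x, ∑ y, T x y = 1)
    (P Q : X → ℝ) (hP0 : ∀ x, 0 ≤ P x) (hQ0 : ∀ x, 0 ≤ Q x)
    (hP1 : ∑ x, P x = 1) (hQ1 : ∑ x, Q x = 1)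
    (βs : ℝ) (hβs0 : 0 ≤ βs)
    (hβs : ∀ T ∈ 𝒯,
      βs ≤ betaAff l (fun y => ∑ x, P x * T x y) (fun y => ∑ x, Q x * T x y))
    (n : ℕ) (T : (i : Fin n) → X → (Fin i → Y) → Y → ℝ)
    (hT : ∀ (i : Fin n) (h : Fin i → Y), (fun x y => T i x h y) ∈ 𝒯) :
    βs ^ n ≤ betaAff l (seqOut n P T) (seqOut n Q T) := by
  induction n with
  | zero =>
    simp [betaAff, seqOut]
  | succ n ih =>
    set T' : (j : Fin n) → X → (Fin j → Y) → Y → ℝ := fun j => T j.castSucc with hT'def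
    have hT' : ∀ (j : Fin n) (h : Fin j → Y), (fun x y => T' j x h y) ∈ 𝒯 :=
      fun j h => hT j.castSucc h
    have hTnn : ∀ (i : Fin (n+1)) x h y, 0 ≤ T i x h y :=
      fun i x h y => (h𝒯 _ (hT i h)).1 x y
    have hA : ∀ y', 0 ≤ seqOut n P T' y' :=
      seqOut_nonneg n P hP0 T' (fun j x h y => hTnn j.castSucc x h y)
    have hB : ∀ y', 0 ≤ seqOut n Q T' y' :=
      seqOut_nonneg n Q hQ0 T' (fun j x h y => hTnn j.castSucc x h y)
    have key : betaAff l (seqOut (n+1) P T) (seqOut (n+1) Q T)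
        = ∑ y' : Fin n → Y, (seqOut n P T' y') ^ l * (seqOut n Q T' y') ^ (1 - l) *
            ∑ a, (∑ x, P x * T (Fin.last n) x y' a) ^ l *
                 (∑ x, Q x * T (Fin.last n) x y' a) ^ (1 - l) := by
      unfold betaAff
      rw [sum_snoc]
      refine Finset.sum_congr rfl fun y' _ => ?_
      rw [Finset.mul_sum]
      refine Finset.sum_congr rfl fun a _ => ?_
      rw [seqOut_snoc, seqOut_snoc]
      rw [Real.mul_rpow (hA y') (Finset.sum_nonneg fun x _ =>
          mul_nonneg (hP0 x) (hTnn _ _ _ _)),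
        Real.mul_rpow (hB y') (Finset.sum_nonneg fun x _ =>
          mul_nonneg (hQ0 x) (hTnn _ _ _ _))]
      ring
    rw [key, pow_succ]
    calc βs ^ n * βs ≤ (∑ y' : Fin n → Y,
          (seqOut n P T' y') ^ l * (seqOut n Q T' y') ^ (1 - l)) * βs := by
          exact mul_le_mul_of_nonneg_right (ih T' hT') hβs0
      _ = ∑ y' : Fin n → Y,
          (seqOut n P T' y') ^ l * (seqOut n Q T' y') ^ (1 - l) * βs := by
          rw [Finset.sum_mul]
      _ ≤ _ := by
          refine Finset.sum_le_sum fun y' _ => ?_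
          refine mul_le_mul_of_nonneg_left ?_
            (mul_nonneg (Real.rpow_nonneg (hA y') l) (Real.rpow_nonneg (hB y') (1 - l)))
          exact hβs _ (hT (Fin.last n) y')
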